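/- arXiv:1910.11171 — 2 statements merged into one kernel-verified Lean document; each statement's English description precedes it below -/
import Mathlib

section
/- Let f : L₁ → L₂ be a homomorphism of finitely generated free ℤ-modules. Then the cokernel of the dual map f* : Hom(L₂, ℤ) → Hom(L₁, ℤ) is finite if and only if f is injective. -/
/-!
If `f x = 0`, then for every `φ` some nonzero multiple `n • φ = ψ ∘ f` vanishes at `x`, so
`φ x = 0` for all `φ` and `x = 0`. Conversely, a Smith normal form of the lattice `f(L₁) ⊆ L₂`
gives bases with `f(eᵢ) = aᵢ • e'ᵢ`, `aᵢ ≠ 0`, so `aᵢ` times the `i`-th coordinate functional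
of `L₁` lifts to `L₂`. The cokernel of `f*` is therefore a finitely generated torsion group,
hence finite.
-/

open Module

section PID

variable {R M : Type*} [CommRing R] [IsDomain R] [IsPrincipalIdealRing R]
  [AddCommGroup M] [Module R M] [Module.Free R M] [Module.Finite R M]

theorem Submodule.isTorsion_dual_quotient_range_dualMap_subtype (N : Submodule R M) :
    IsTorsion R (Dual R N ⧸ LinearMap.range N.subtype.dualMap) := by
  classical
  set P := LinearMap.range N.subtype.dualMap
  obtain ⟨n, snf⟩ := N.smithNormalForm (Free.chooseBasis R M)
  have coord_mem_torsion (i : Fin n) :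
      P.mkQ (snf.bN.dualBasis i) ∈ torsion R (Dual R N ⧸ P) := by
    have ha : snf.a i ≠ 0 := by
      rintro ha
      exact snf.bN.ne_zero i (Subtype.ext (by rw [snf.snf i, ha, zero_smul]; rfl))
    refine (mem_torsion_iff _).mpr ⟨⟨snf.a i, mem_nonZeroDivisors_of_ne_zero ha⟩, ?_⟩
    rw [← LinearMap.map_smul_of_tower, mkQ_apply, Quotient.mk_eq_zero, Basis.coe_dualBasis]
    exact ⟨snf.bM.coord (snf.f i), snf.coord_apply_embedding_eq_smul_coord⟩
  have hspan : span R (Set.range (P.mkQ ∘ snf.bN.dualBasis)) = ⊤ := by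
    rw [Set.range_comp, ← map_span, snf.bN.dualBasis.span_eq, map_top, range_mkQ]
  have htop : ⊤ ≤ torsion R (Dual R N ⧸ P) :=
    hspan ▸ span_le.mpr (Set.range_subset_iff.mpr coord_mem_torsion)
  exact fun x ↦ (mem_torsion_iff x).mp (htop trivial)

theorem LinearMap.isTorsion_dual_quotient_range_dualMap_of_injective {M' : Type*}
    [AddCommGroup M'] [Module R M'] (f : M' →ₗ[R] M) (hf : Function.Injective f) :
    IsTorsion R (Dual R M' ⧸ range f.dualMap) := by
  let e := LinearEquiv.ofInjective f hf
  have hrange : (range (range f).subtype.dualMap).map e.dualMap.toLinearMap = range f.dualMap := by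
    rw [← range_comp]
    rfl
  let E := Submodule.Quotient.equiv _ _ e.dualMap hrange
  intro x
  obtain ⟨a, ha⟩ := (range f).isTorsion_dual_quotient_range_dualMap_subtype (x := E.symm x)
  exact ⟨a, by simpa [Submonoid.smul_def] using congrArg E ha⟩

end PID

theorem LinearMap.injective_of_isTorsion_dual_quotient_range_dualMap {R M M' : Type*}
    [CommRing R] [AddCommGroup M] [Module R M] [AddCommGroup M'] [Module R M'] [Projective R M']
    (f : M' →ₗ[R] M) (hf : IsTorsion R (Dual R M' ⧸ range f.dualMap)) :
    Function.Injective f := by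
  refine (injective_iff_map_eq_zero f).mpr fun x hx ↦ ?_
  refine (forall_dual_apply_eq_zero_iff R x).mp fun φ ↦ ?_
  obtain ⟨a, ha⟩ := @hf (Submodule.Quotient.mk φ)
  obtain ⟨ψ, hψ⟩ := (Submodule.Quotient.mk_eq_zero _).mp ha
  have : (a : R) * φ x = 0 := by
    simpa [hx] using (LinearMap.congr_fun hψ x).symm
  exact (mem_nonZeroDivisors_iff_right.mp a.2) _ (by rwa [mul_comm] at this)

theorem Module.finite_iff_isTorsion_int (Q : Type*) [AddCommGroup Q] [Module.Finite ℤ Q] :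
    Finite Q ↔ IsTorsion ℤ Q :=
  ⟨fun _ ↦ isAddTorsion_iff_isTorsion_int.mp isAddTorsion_of_finite, finite_of_fg_torsion Q⟩

/-- Let `f : L₁ → L₂` be a homomorphism of finitely generated free `ℤ`-modules.  Then the
cokernel of the dual map `f* : Hom(L₂, ℤ) → Hom(L₁, ℤ)` is finite if and only if `f` is
injective. -/
theorem stmt3 {L₁ L₂ : Type} [AddCommGroup L₁] [AddCommGroup L₂]
    [Module ℤ L₁] [Module ℤ L₂]
    [Module.Free ℤ L₁] [Module.Finite ℤ L₁] [Module.Free ℤ L₂] [Module.Finite ℤ L₂]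
    (f : L₁ →ₗ[ℤ] L₂) :
    Finite (Module.Dual ℤ L₁ ⧸ LinearMap.range f.dualMap) ↔ Function.Injective f := by
  rw [finite_iff_isTorsion_int]
  exact ⟨f.injective_of_isTorsion_dual_quotient_range_dualMap,
    f.isTorsion_dual_quotient_range_dualMap_of_injective⟩
end

section
/- Let A be an abelian group such that A[n] (the n-torsion subgroup) is finite for every n ≥ 1, and suppose A is torsion. Then for every prime ℓ, the quotient of the ℓ-primary component A{ℓ} by its maximal divisible subgroup is isomorphic to the ℓ-adic completion lim_k A{ℓ}/ℓ^k A{ℓ}. -/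
/-- The subgroup `nA` of `n`-th multiples of an abelian group `A`. -/
def mulSub (A : Type*) [AddCommGroup A] (n : ℕ) : AddSubgroup A :=
  AddMonoidHom.range (n • AddMonoidHom.id A)

lemma mulSub_le (A : Type*) [AddCommGroup A] {a b : ℕ} (h : a ∣ b) :
    mulSub A b ≤ mulSub A a := by
  obtain ⟨c, rfl⟩ := h
  rintro x ⟨y, rfl⟩
  exact ⟨c • y, by simp [mul_smul]⟩

/-- The canonical projection `A/bA → A/aA` for `a ∣ b`. -/
def projDvd (A : Type*) [AddCommGroup A] {a b : ℕ} (h : a ∣ b) :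
    A ⧸ mulSub A b →+ A ⧸ mulSub A a :=
  QuotientAddGroup.map _ _ (AddMonoidHom.id A) (fun _ hx => mulSub_le A h hx)

/-- The `ℓ`-primary component `A{ℓ}` of an abelian group `A`: the subgroup of elements of
`ℓ`-power order. -/
def primaryComponent (A : Type*) [AddCommGroup A] (ℓ : ℕ) : AddSubgroup A where
  carrier := {a | ∃ k : ℕ, ℓ ^ k • a = 0}
  zero_mem' := ⟨0, by simp⟩
  add_mem' := by
    rintro a b ⟨k, hk⟩ ⟨j, hj⟩
    refine ⟨k + j, ?_⟩
    rw [smul_add, pow_add, mul_smul, mul_smul, hj, smul_zero, add_zero, smul_comm, hk, smul_zero]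
  neg_mem' := by
    rintro a ⟨k, hk⟩
    exact ⟨k, by rw [smul_neg, hk, neg_zero]⟩

/-- The maximal divisible subgroup of an abelian group: the sum of all divisible subgroups. -/
def maxDivisible (B : Type*) [AddCommGroup B] : AddSubgroup B :=
  sSup {D : AddSubgroup B | ∀ d ∈ D, ∀ n : ℕ, 1 ≤ n → ∃ e ∈ D, n • e = d}

/-- The `ℓ`-adic completion `lim_k B/ℓ^k B` of an abelian group `B`, as a subgroup of the
product of the quotients `B/ℓ^k B`. -/
def ellAdicCompletion (B : Type*) [AddCommGroup B] (ℓ : ℕ) :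
    AddSubgroup (∀ k : ℕ, B ⧸ mulSub B (ℓ ^ k)) where
  carrier := {f | ∀ k k' : ℕ, ∀ h : k ≤ k', projDvd B (pow_dvd_pow ℓ h) (f k') = f k}
  zero_mem' := by intro k k' h; simp
  add_mem' := by
    intro f g hf hg k k' h
    simp [Pi.add_apply, map_add, hf k k' h, hg k k' h]
  neg_mem' := by
    intro f hf k k' h
    simp [Pi.neg_apply, map_neg, hf k k' h]

/-!
Write `B = A{ℓ}`. Since `B[ℓ]` is finite, the decreasing chain `B[ℓ] ∩ ℓ^k B` stabilizes, and a
descent on the order of an element turns this into stabilization of the chain `ℓ^k B` itself, say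
at `ℓ^K B`. That subgroup is then `ℓ`-divisible, and divisible by every other prime because `B`
is `ℓ`-primary, so it is the maximal divisible subgroup (which lies in every `nB`). Finally the
diagonal map `B → lim_k B/ℓ^k B` has kernel `⋂ ℓ^k B = ℓ^K B`, and it is onto because the inverse
system is eventually constant.
-/

variable {B : Type*} [AddCommGroup B]

lemma mem_mulSub {n : ℕ} {x : B} : x ∈ mulSub B n ↔ ∃ y, n • y = x := by
  simp [mulSub]

lemma nsmul_mem_mulSub (n : ℕ) (y : B) : n • y ∈ mulSub B n :=
  mem_mulSub.mpr ⟨y, rfl⟩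

lemma maxDivisible_le_mulSub {n : ℕ} (hn : 1 ≤ n) : maxDivisible B ≤ mulSub B n :=
  sSup_le fun _ hD d hd => (hD d hd n hn).elim fun e he => he.2 ▸ nsmul_mem_mulSub n e

lemma le_maxDivisible_of_prime {D : AddSubgroup B}
    (hD : ∀ p : ℕ, p.Prime → ∀ d ∈ D, ∃ e ∈ D, p • e = d) : D ≤ maxDivisible B := by
  refine le_sSup fun d hd n hn => ?_
  induction n using Nat.recOnMul generalizing d with
  | zero => omega
  | one => exact ⟨d, hd, one_smul ℕ d⟩
  | prime p hp => exact hD p hp d hd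
  | mul a b iha ihb =>
    obtain ⟨e, heD, rfl⟩ := iha d hd (Nat.pos_of_mul_pos_right hn)
    obtain ⟨f, hfD, rfl⟩ := ihb e heD (Nat.pos_of_mul_pos_left hn)
    exact ⟨f, hfD, mul_smul a b f⟩

section Primary

variable {ℓ : ℕ}

lemma exists_nsmul_nsmul_eq_self_of_coprime {p r : ℕ} (hp : p.Coprime ℓ) {d : B}
    (hd : ℓ ^ r • d = 0) : ∃ m : ℕ, p • m • d = d := by
  have hcop : p.Coprime (addOrderOf d) :=
    (hp.pow_right r).coprime_dvd_right (addOrderOf_dvd_of_nsmul_eq_zero hd)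
  obtain ⟨m, hm⟩ := exists_nsmul_eq_self_of_coprime hcop
  exact ⟨m, by rwa [smul_comm]⟩

lemma exists_forall_torsion_mem_mulSub_pow_succ (hfin : Finite {b : B // ℓ • b = 0}) :
    ∃ K, ∀ k, K ≤ k → ∀ c : B, ℓ • c = 0 → c ∈ mulSub B (ℓ ^ k) →
      c ∈ mulSub B (ℓ ^ (k + 1)) := by
  let T : ℕ → Set {b : B // ℓ • b = 0} := fun k => {c | c.1 ∈ mulSub B (ℓ ^ k)}
  have hT : Antitone T := fun k k' h c hc => mulSub_le B (pow_dvd_pow ℓ h) hc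
  obtain ⟨K, hK⟩ := WellFoundedLT.antitone_chain_condition hT
  refine ⟨K, fun k hk c hc hck => ?_⟩
  change (⟨c, hc⟩ : {b : B // ℓ • b = 0}) ∈ T (k + 1)
  rw [← hK (k + 1) (by omega), hK k hk]
  exact hck

variable {K : ℕ}
  (hstep : ∀ k, K ≤ k → ∀ c : B, ℓ • c = 0 → c ∈ mulSub B (ℓ ^ k) → c ∈ mulSub B (ℓ ^ (k + 1)))
include hstep

lemma mem_mulSub_pow_succ_of_nsmul_eq_zero {n : ℕ} {b : B} (hb : ℓ ^ n • b = 0) :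
    ∀ k, K ≤ k → b ∈ mulSub B (ℓ ^ k) → b ∈ mulSub B (ℓ ^ (k + 1)) := by
  induction n generalizing b with
  | zero => simp_all
  | succ n ih =>
    intro k hk hbk
    obtain ⟨x, rfl⟩ := mem_mulSub.mp hbk
    -- `ℓ • b` is killed by `ℓ ^ n`, so it lies one level deeper; correct `b` by an element of
    -- `ℓ^(k+1) B` to reach an element of `B[ℓ] ∩ ℓ^k B`.
    have hℓb : ℓ • ℓ ^ k • x ∈ mulSub B (ℓ ^ (k + 1 + 1)) := by
      refine ih (by rwa [smul_comm, ← mul_smul, ← pow_succ']) (k + 1) (by omega) ?_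
      rw [← mul_smul, ← pow_succ']
      exact nsmul_mem_mulSub _ x
    obtain ⟨y, hy⟩ := mem_mulSub.mp hℓb
    have hc := hstep k hk (ℓ ^ k • x - ℓ ^ (k + 1) • y)
      (by rw [smul_sub, ← hy, ← mul_smul, ← pow_succ', sub_self])
      (sub_mem (nsmul_mem_mulSub _ x) (by rw [pow_succ, mul_smul]; exact nsmul_mem_mulSub _ _))
    simpa using add_mem hc (nsmul_mem_mulSub _ y)

lemma mulSub_pow_eq_of_le (htor : ∀ b : B, ∃ n, ℓ ^ n • b = 0) :
    ∀ k, K ≤ k → mulSub B (ℓ ^ k) = mulSub B (ℓ ^ K) := by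
  intro k hk
  induction k, hk using Nat.le_induction with
  | base => rfl
  | succ k hk ih =>
    refine le_antisymm ((mulSub_le B (pow_dvd_pow ℓ k.le_succ)).trans ih.le) fun b hb => ?_
    obtain ⟨n, hn⟩ := htor b
    exact mem_mulSub_pow_succ_of_nsmul_eq_zero hstep hn k hk (ih ▸ hb)

end Primary

variable (B) in
def toEllAdicCompletion (ℓ : ℕ) : B →+ ellAdicCompletion B ℓ :=
  (AddMonoidHom.pi fun k => QuotientAddGroup.mk' (mulSub B (ℓ ^ k))).codRestrict _
    fun _ _ _ _ => rfl

lemma ker_toEllAdicCompletion (ℓ : ℕ) :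
    (toEllAdicCompletion B ℓ).ker = ⨅ k, mulSub B (ℓ ^ k) := by
  ext b
  simp only [AddMonoidHom.mem_ker, AddSubgroup.mem_iInf, Subtype.ext_iff, funext_iff]
  exact forall_congr' fun k => QuotientAddGroup.eq_zero_iff b

section Stable

variable {ℓ K : ℕ} (hK : ∀ k, K ≤ k → mulSub B (ℓ ^ k) = mulSub B (ℓ ^ K))
include hK

lemma iInf_mulSub_pow_eq : ⨅ k, mulSub B (ℓ ^ k) = mulSub B (ℓ ^ K) := by
  refine le_antisymm (iInf_le _ K) (le_iInf fun k => ?_)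
  rcases le_total k K with h | h
  · exact mulSub_le B (pow_dvd_pow ℓ h)
  · exact (hK k h).ge

lemma toEllAdicCompletion_surjective : Function.Surjective (toEllAdicCompletion B ℓ) := by
  rintro ⟨f, hf⟩
  obtain ⟨b, hb⟩ := QuotientAddGroup.mk_surjective (f K)
  refine ⟨b, Subtype.ext (funext fun k => ?_)⟩
  change (b : B ⧸ mulSub B (ℓ ^ k)) = f k
  rcases le_total k K with h | h
  · rw [← hf k K h, ← hb]
    rfl
  · -- `f K` is the image of `f k`, and the projection from level `k` to level `K` is injective.
    obtain ⟨c, hc⟩ := QuotientAddGroup.mk_surjective (f k)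
    have hbc : (b : B ⧸ mulSub B (ℓ ^ K)) = c := by rw [hb, ← hf K k h, ← hc]; rfl
    rw [← hc, QuotientAddGroup.eq, hK k h]
    exact QuotientAddGroup.eq.mp hbc

lemma maxDivisible_eq_mulSub_pow (hℓ : ℓ.Prime) (htor : ∀ b : B, ∃ n, ℓ ^ n • b = 0) :
    maxDivisible B = mulSub B (ℓ ^ K) := by
  refine le_antisymm (maxDivisible_le_mulSub (Nat.one_le_pow _ _ hℓ.pos)) ?_
  refine le_maxDivisible_of_prime fun p hp d hd => ?_
  by_cases hpℓ : p = ℓ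
  · subst hpℓ
    obtain ⟨x, rfl⟩ := mem_mulSub.mp (hK (K + 1) K.le_succ ▸ hd)
    exact ⟨p ^ K • x, nsmul_mem_mulSub _ x, by rw [← mul_smul, ← pow_succ']⟩
  · obtain ⟨r, hr⟩ := htor d
    obtain ⟨m, hm⟩ :=
      exists_nsmul_nsmul_eq_self_of_coprime ((Nat.coprime_primes hp hℓ).mpr hpℓ) hr
    exact ⟨m • d, nsmul_mem hd m, hm⟩

end Stable

lemma nonempty_quotient_maxDivisible_addEquiv_ellAdicCompletion {ℓ : ℕ} (hℓ : ℓ.Prime)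
    (htor : ∀ b : B, ∃ n, ℓ ^ n • b = 0) (hfin : Finite {b : B // ℓ • b = 0}) :
    Nonempty ((B ⧸ maxDivisible B) ≃+ ellAdicCompletion B ℓ) := by
  obtain ⟨K, hstep⟩ := exists_forall_torsion_mem_mulSub_pow_succ hfin
  have hK := mulSub_pow_eq_of_le hstep htor
  have hker : maxDivisible B = (toEllAdicCompletion B ℓ).ker := by
    rw [ker_toEllAdicCompletion, iInf_mulSub_pow_eq hK, maxDivisible_eq_mulSub_pow hK hℓ htor]
  exact ⟨(QuotientAddGroup.quotientAddEquivOfEq hker).trans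
    (QuotientAddGroup.quotientKerEquivOfSurjective _ (toEllAdicCompletion_surjective hK))⟩

lemma AddSubgroup.finite_nsmul_eq_zero (H : AddSubgroup B) {n : ℕ}
    (hfin : Finite {b : B // n • b = 0}) : Finite {h : H // n • h = 0} :=
  Finite.of_injective (fun h => (⟨h.1, by simpa using congrArg Subtype.val h.2⟩ :
    {b : B // n • b = 0})) fun x y hxy => Subtype.ext (Subtype.ext (congrArg Subtype.val hxy :))

theorem stmt8_general (A : Type) [AddCommGroup A]
    (hcof : ∀ n : ℕ, 1 ≤ n → Finite {a : A // n • a = 0})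
    (ℓ : ℕ) (hℓ : ℓ.Prime) :
    Nonempty ((↥(primaryComponent A ℓ) ⧸ maxDivisible ↥(primaryComponent A ℓ)) ≃+
      ↥(ellAdicCompletion (↥(primaryComponent A ℓ)) ℓ)) :=
  nonempty_quotient_maxDivisible_addEquiv_ellAdicCompletion hℓ
    (fun b => b.2.imp fun _ hk => Subtype.ext (by simpa using hk))
    ((primaryComponent A ℓ).finite_nsmul_eq_zero (hcof ℓ hℓ.one_lt.le))

/-- Let `A` be a torsion abelian group of cofinite type (each `A[n]` finite).  Then for every
prime `ℓ`, the quotient of the `ℓ`-primary component `A{ℓ}` by its maximal divisible subgroup is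
isomorphic to the `ℓ`-adic completion `lim_k A{ℓ}/ℓ^k A{ℓ}`. -/
theorem stmt8 (A : Type) [AddCommGroup A] (htors : AddMonoid.IsTorsion A)
    (hcof : ∀ n : ℕ, 1 ≤ n → Finite {a : A // n • a = 0})
    (ℓ : ℕ) (hℓ : ℓ.Prime) :
    Nonempty ((↥(primaryComponent A ℓ) ⧸ maxDivisible ↥(primaryComponent A ℓ)) ≃+
      ↥(ellAdicCompletion (↥(primaryComponent A ℓ)) ℓ)) :=
  stmt8_general A hcof ℓ hℓ
end
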